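/- arXiv:2403.16114 — 2 statements merged into one kernel-verified Lean document; each statement's English description precedes it below -/
import Mathlib

section
/- Let B ⊆ Z_{≥0}^{m_1+...+m_n} be a set of vectors of equal modulus t satisfying the generalized bi-exchange property, and let u ∈ Z_{≥0}^{m_1+...+m_n} be arbitrary. Define B:u to be the set of minimal elements of {(a − u)^+ : a ∈ B}, where (v)^+ denotes the componentwise positive part max(v,0). If all elements of B:u have the same modulus, then B:u satisfies the generalized bi-exchange property. -/
open Finset

/-- Index set: pairs (i,j) with 1 ≤ i ≤ n, 1 ≤ j ≤ m i. -/
abbrev Idx (n : ℕ) (m : Fin n → ℕ) := (i : Fin n) × Fin (m i)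

/-- The vector a − e_{ij} + e_{il}. -/
def exchStep {n : ℕ} {m : Fin n → ℕ} (a : Idx n m → ℕ) (i : Fin n) (j l : Fin (m i)) :
    Idx n m → ℕ :=
  fun p => if p = ⟨i, j⟩ then a p - 1 else if p = ⟨i, l⟩ then a p + 1 else a p

/-- The generalized bi-exchange property. -/
def BiExchange {n : ℕ} {m : Fin n → ℕ} (B : Set (Idx n m → ℕ)) : Prop :=
  ∀ a ∈ B, ∀ b ∈ B, ∀ (i : Fin n) (j : Fin (m i)),
    b ⟨i, j⟩ < a ⟨i, j⟩ →
      ∃ l : Fin (m i), a ⟨i, l⟩ < b ⟨i, l⟩ ∧ exchStep a i j l ∈ B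

/-!
Write `c = (a - u)⁺` and `d = (b - u)⁺` for minimal elements with `c_{ij} > d_{ij}`; then
`a_{ij} > b_{ij}`, and exchanging in `B` gives `l` with `a_{il} < b_{il}` and
`a' = a - e_{ij} + e_{il} ∈ B`. If `a_{il} < u_{il}`, then `(a' - u)⁺ < c`, contradicting the
minimality of `c`. Otherwise `(a' - u)⁺ = c - e_{ij} + e_{il}`, which has the modulus common to all
minimal elements; and an element of that modulus is minimal, since it dominates a minimal element
of the same modulus.
-/

section Minimal

variable {κ : Type*} [Fintype κ] {P : (κ → ℕ) → Prop} {s : ℕ} {x : κ → ℕ}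

lemma minimal_of_sum_eq (hs : ∀ c, Minimal P c → ∑ p, c p = s) (hx : P x)
    (hsum : ∑ p, x p = s) : Minimal P x := by
  refine ⟨hx, fun y hy hyx => ?_⟩
  obtain ⟨z, hzy, hz⟩ := exists_minimal_le_of_wellFoundedLT P y hy
  have hzx : z = x := by
    have hle : z ≤ x := hzy.trans hyx
    funext p
    exact (sum_eq_sum_iff_of_le fun p _ => hle p).1 (by rw [hs z hz, hsum]) p (mem_univ p)
  exact hzx ▸ hzy

end Minimal

section ExchStep

variable {n : ℕ} {m : Fin n → ℕ} {a u : Idx n m → ℕ} {i : Fin n} {j l : Fin (m i)}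

lemma exchStep_apply_left : exchStep a i j l ⟨i, j⟩ = a ⟨i, j⟩ - 1 := by
  simp [exchStep]

lemma exchStep_apply_right (hjl : j ≠ l) : exchStep a i j l ⟨i, l⟩ = a ⟨i, l⟩ + 1 := by
  simp [exchStep, hjl.symm]

lemma exchStep_apply_of_ne {p : Idx n m} (hj : p ≠ ⟨i, j⟩) (hl : p ≠ ⟨i, l⟩) :
    exchStep a i j l p = a p := by
  simp [exchStep, hj, hl]

lemma sum_exchStep (hjl : j ≠ l) (ha : 0 < a ⟨i, j⟩) :
    ∑ p, exchStep a i j l p = ∑ p, a p := by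
  classical
  have hne : (⟨i, j⟩ : Idx n m) ≠ ⟨i, l⟩ := sigma_mk_injective.ne hjl
  have hpt : ∀ p, exchStep a i j l p + (Pi.single ⟨i, j⟩ 1 : Idx n m → ℕ) p =
      a p + (Pi.single ⟨i, l⟩ 1 : Idx n m → ℕ) p := by
    intro p
    by_cases hj : p = ⟨i, j⟩
    · subst hj
      rw [exchStep_apply_left, Pi.single_eq_same, Pi.single_eq_of_ne hne]
      omega
    by_cases hl : p = ⟨i, l⟩
    · subst hl
      rw [exchStep_apply_right hjl, Pi.single_eq_same, Pi.single_eq_of_ne hj, add_zero]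
    · rw [exchStep_apply_of_ne hj hl, Pi.single_eq_of_ne hj, Pi.single_eq_of_ne hl]
  have := congrArg (fun f : Idx n m → ℕ => ∑ p, f p) (funext hpt)
  simpa [sum_add_distrib] using this

lemma exchStep_tsub (hjl : j ≠ l) (hj : u ⟨i, j⟩ < a ⟨i, j⟩) (hl : u ⟨i, l⟩ ≤ a ⟨i, l⟩) :
    exchStep a i j l - u = exchStep (a - u) i j l := by
  funext p
  by_cases hpj : p = ⟨i, j⟩
  · subst hpj; simp only [Pi.sub_apply, exchStep_apply_left]; omega
  by_cases hpl : p = ⟨i, l⟩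
  · subst hpl; simp only [Pi.sub_apply, exchStep_apply_right hjl]; omega
  · simp only [Pi.sub_apply, exchStep_apply_of_ne hpj hpl]

lemma exchStep_tsub_le (hjl : j ≠ l) (hl : a ⟨i, l⟩ < u ⟨i, l⟩) :
    exchStep a i j l - u ≤ a - u := by
  intro p
  by_cases hpj : p = ⟨i, j⟩
  · subst hpj; simp only [Pi.sub_apply, exchStep_apply_left]; omega
  by_cases hpl : p = ⟨i, l⟩
  · subst hpl; simp only [Pi.sub_apply, exchStep_apply_right hjl]; omega
  · simp only [Pi.sub_apply, exchStep_apply_of_ne hpj hpl, le_rfl]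

end ExchStep

theorem BiExchange.minimal_image_tsub {n : ℕ} {m : Fin n → ℕ} {B : Set (Idx n m → ℕ)}
    (hex : BiExchange B) (u : Idx n m → ℕ) {s : ℕ}
    (hs : ∀ c, Minimal (· ∈ (· - u) '' B) c → ∑ p, c p = s) :
    BiExchange {c | Minimal (· ∈ (· - u) '' B) c} := by
  rintro _ hc _ hd i j hlt
  obtain ⟨a, haB, rfl⟩ := hc.prop
  obtain ⟨b, hbB, rfl⟩ := hd.prop
  simp only [Pi.sub_apply] at hlt ⊢
  obtain ⟨l, hl, ha'B⟩ := hex a haB b hbB i j (by omega)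
  have hjl : j ≠ l := by rintro rfl; omega
  have hul : u ⟨i, l⟩ ≤ a ⟨i, l⟩ := by
    by_contra! hlu
    have hca := hc.eq_of_le ⟨_, ha'B, rfl⟩ (exchStep_tsub_le hjl hlu)
    have := congrFun hca ⟨i, j⟩
    simp only [Pi.sub_apply, exchStep_apply_left] at this
    omega
  have hmem : exchStep (a - u) i j l ∈ (· - u) '' B :=
    ⟨_, ha'B, exchStep_tsub hjl (by omega) hul⟩
  refine ⟨l, by omega, minimal_of_sum_eq hs hmem ?_⟩
  rw [sum_exchStep hjl (by simp only [Pi.sub_apply]; omega)]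
  exact hs _ hc

theorem stmt12_general {n : ℕ} {m : Fin n → ℕ} (B : Set (Idx n m → ℕ)) (hex : BiExchange B)
    (u : Idx n m → ℕ)
    (S : Set (Idx n m → ℕ)) (hS : S = {c | ∃ a ∈ B, c = fun p => a p - u p})
    (Bu : Set (Idx n m → ℕ)) (hBu : Bu = {c ∈ S | ∀ d ∈ S, d ≤ c → d = c})
    (hsame : ∃ s : ℕ, ∀ c ∈ Bu, (∑ p, c p) = s) :
    BiExchange Bu := by
  have hS' : S = (· - u) '' B := by
    ext c; simp only [hS, Set.mem_ofPred_eq, Set.mem_image, eq_comm (a := c)]; rfl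
  have hBu' : Bu = {c | Minimal (· ∈ S) c} := by
    ext c; simp only [hBu, Set.mem_ofPred_eq, minimal_iff, eq_comm (a := c)]
  obtain ⟨s, hs⟩ := hsame
  subst hBu' hS'
  exact hex.minimal_image_tsub u hs

/-- colon by a monomial. B:u is the set of minimal elements of
{(a − u)⁺ : a ∈ B} (componentwise truncated subtraction). If all its elements have the
same modulus, it satisfies the generalized bi-exchange property. -/
theorem stmt12 {n : ℕ} {m : Fin n → ℕ} (B : Set (Idx n m → ℕ)) (t : ℕ)
    (hmod : ∀ a ∈ B, (∑ p, a p) = t) (hex : BiExchange B)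
    (u : Idx n m → ℕ)
    (S : Set (Idx n m → ℕ)) (hS : S = {c | ∃ a ∈ B, c = fun p => a p - u p})
    (Bu : Set (Idx n m → ℕ)) (hBu : Bu = {c ∈ S | ∀ d ∈ S, d ≤ c → d = c})
    (hsame : ∃ s : ℕ, ∀ c ∈ Bu, (∑ p, c p) = s) :
    BiExchange Bu :=
  stmt12_general B hex u S hS Bu hBu hsame
end

section
/- Let B ⊆ Z_{≥0}^{m_1+...+m_n} be a finite nonempty set of vectors of equal modulus satisfying the generalized bi-exchange property. Then the downset P* = {b ∈ Z_{≥0}^{m_1+...+m_n} : b ≤ a for some a ∈ B} is a generalized discrete bi-polymatroid whose set of bases is exactly B. -/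
/-!
Given `a ≤ a₀ ∈ B` and `b ≤ b' ∈ B` with `|a| < |b|`, take `a' ∈ B` above `a` minimizing the
excess `∑ (a' - b')`. Bi-exchange forces `a' = a` wherever `a'` exceeds `b'`, since otherwise an
exchange step would stay above `a` and lower the excess. If also `a' = a` wherever `a < b`, then
`∑ (b - a) ≤ ∑ (b' - a') = ∑ (a' - b') ≤ ∑ (a - b)`, the middle equality because `|a'| = |b'|`;
this contradicts `|a| < |b|`. So some `a q < b q` has room below `a' q`, and `a + e_q` augments.
Bases are exactly `B` because all of `B` has the same modulus.
-/

open Finset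

/-- A generalized discrete bi-polymatroid: (D1) closed under integral subvectors and
(D2) the augmentation axiom. -/
def IsGDBP {n : ℕ} {m : Fin n → ℕ} (P : Set (Idx n m → ℕ)) : Prop :=
  (∀ a ∈ P, ∀ b : Idx n m → ℕ, b ≤ a → b ∈ P) ∧
  (∀ a ∈ P, ∀ b ∈ P, (∑ p, a p) < (∑ p, b p) →
    ∃ u ∈ P, a < u ∧ u ≤ a ⊔ b)

/-- The set of bases (maximal elements) of P. -/
def basesOf {n : ℕ} {m : Fin n → ℕ} (P : Set (Idx n m → ℕ)) : Set (Idx n m → ℕ) :=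
  {a ∈ P | ∀ b ∈ P, ¬ a < b}

open Function

lemma sum_add_sum_tsub_comm {ι : Type*} [Fintype ι] (f g : ι → ℕ) :
    (∑ p, f p) + ∑ p, (g p - f p) = (∑ p, g p) + ∑ p, (f p - g p) := by
  simp only [← sum_add_distrib]
  exact sum_congr rfl fun p _ => by omega

lemma exists_lt_of_sum_lt {ι : Type*} [Fintype ι] {a b a' b' : ι → ℕ}
    (haa' : a ≤ a') (hbb' : b ≤ b') (hsum : ∑ p, a' p = ∑ p, b' p)
    (htight : ∀ p, b' p < a' p → a' p = a p) (hlt : ∑ p, a p < ∑ p, b p) :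
    ∃ q, a q < b q ∧ a q < a' q := by
  by_contra! h
  have hle (p : ι) : a p ≤ a' p ∧ b p ≤ b' p := ⟨haa' p, hbb' p⟩
  have hdef : ∑ p, (b p - a p) ≤ ∑ p, (b' p - a' p) :=
    sum_le_sum fun p _ => by have := hle p; have := imp_iff_not_or.1 (h p); omega
  have hexc : ∑ p, (a' p - b' p) ≤ ∑ p, (a p - b p) :=
    sum_le_sum fun p _ => by have := hle p; have := imp_iff_not_or.1 (htight p); omega
  have := sum_add_sum_tsub_comm a b
  have := sum_add_sum_tsub_comm a' b'
  omega

section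

variable {n : ℕ} {m : Fin n → ℕ} {B : Set (Idx n m → ℕ)} {t : ℕ}

lemma le_exchStep {a c : Idx n m → ℕ} {i : Fin n} {j : Fin (m i)} (l : Fin (m i))
    (hac : a ≤ c) (hj : a ⟨i, j⟩ < c ⟨i, j⟩) : a ≤ exchStep c i j l := by
  intro p
  unfold exchStep
  split_ifs with hpj hpl
  · subst hpj; exact Nat.le_sub_one_of_lt hj
  · exact (hac p).trans (Nat.le_succ _)
  · exact hac p

lemma sum_tsub_exchStep_lt {a b : Idx n m → ℕ} {i : Fin n} {j l : Fin (m i)}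
    (hj : b ⟨i, j⟩ < a ⟨i, j⟩) (hl : a ⟨i, l⟩ < b ⟨i, l⟩) :
    ∑ p, (exchStep a i j l p - b p) < ∑ p, (a p - b p) := by
  refine sum_lt_sum (fun p _ => ?_) ⟨⟨i, j⟩, mem_univ _, ?_⟩
  · unfold exchStep
    split_ifs with hpj hpl
    · omega
    · subst hpl; omega
    · rfl
  · simp only [exchStep, ↓reduceIte]
    omega

lemma BiExchange.exists_le_tight (hex : BiExchange B)
    {a a₀ b : Idx n m → ℕ} (ha₀ : a₀ ∈ B) (haa₀ : a ≤ a₀) (hb : b ∈ B) :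
    ∃ a' ∈ B, a ≤ a' ∧ ∀ p, b p < a' p → a' p = a p := by
  obtain ⟨a', ⟨ha', haa'⟩, hmin⟩ :=
    (InvImage.wf (fun c => ∑ p, (c p - b p)) wellFounded_lt).has_min
      {c | c ∈ B ∧ a ≤ c} ⟨a₀, ha₀, haa₀⟩
  refine ⟨a', ha', haa', fun ⟨i, j⟩ hj => ?_⟩
  by_contra hne
  obtain ⟨l, hl, hexB⟩ := hex a' ha' b hb i j hj
  exact hmin _ ⟨hexB, le_exchStep l haa' (lt_of_le_of_ne (haa' _) (Ne.symm hne))⟩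
    (sum_tsub_exchStep_lt hj hl)

theorem isGDBP_lowerClosure (hmod : ∀ a ∈ B, ∑ p, a p = t) (hex : BiExchange B) :
    IsGDBP (lowerClosure B : Set (Idx n m → ℕ)) := by
  refine ⟨fun a ha b hba => (lowerClosure B).lower hba ha, ?_⟩
  rintro a ⟨a₀, ha₀, haa₀⟩ b ⟨b', hb', hbb'⟩ hlt
  obtain ⟨a', ha', haa', htight⟩ := hex.exists_le_tight ha₀ haa₀ hb'
  obtain ⟨q, hqb, hqa'⟩ :=
    exists_lt_of_sum_lt haa' hbb' (by rw [hmod a' ha', hmod b' hb']) htight hlt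
  refine ⟨update a q (a q + 1), ⟨a', ha', ?_⟩, lt_update_self_iff.2 (Nat.lt_succ_self _), ?_⟩
  · exact update_le_iff.2 ⟨hqa', fun p _ => haa' p⟩
  · exact update_le_iff.2 ⟨hqb.trans_le le_sup_right, fun p _ => le_sup_left⟩

theorem basesOf_lowerClosure (hmod : ∀ a ∈ B, ∑ p, a p = t) :
    basesOf (lowerClosure B : Set (Idx n m → ℕ)) = B := by
  ext c
  constructor
  · rintro ⟨⟨d, hd, hcd⟩, hmax⟩
    obtain rfl : c = d := hcd.eq_of_not_lt (hmax d (subset_lowerClosure hd))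
    exact hd
  · intro hc
    refine ⟨subset_lowerClosure hc, ?_⟩
    rintro d ⟨d', hd', hdd'⟩ hcd
    have hlt : ∑ p, c p < ∑ p, d' p :=
      (Fintype.sum_strictMono hcd).trans_le (Fintype.sum_mono hdd')
    exact hlt.ne (by rw [hmod c hc, hmod d' hd'])

end

theorem stmt19_general {n : ℕ} {m : Fin n → ℕ} (B : Set (Idx n m → ℕ)) (t : ℕ)
    (hmod : ∀ a ∈ B, (∑ p, a p) = t) (hex : BiExchange B) :
    IsGDBP {b : Idx n m → ℕ | ∃ a ∈ B, b ≤ a} ∧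
      basesOf {b : Idx n m → ℕ | ∃ a ∈ B, b ≤ a} = B :=
  ⟨isGDBP_lowerClosure hmod hex, basesOf_lowerClosure hmod⟩

/-- the downset of a finite nonempty equal-modulus set satisfying the
generalized bi-exchange property is a generalized discrete bi-polymatroid whose set of
bases is exactly B. -/
theorem stmt19 {n : ℕ} {m : Fin n → ℕ} (B : Set (Idx n m → ℕ)) (t : ℕ)
    (hne : B.Nonempty) (hfin : B.Finite)
    (hmod : ∀ a ∈ B, (∑ p, a p) = t) (hex : BiExchange B) :
    IsGDBP {b : Idx n m → ℕ | ∃ a ∈ B, b ≤ a} ∧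
      basesOf {b : Idx n m → ℕ | ∃ a ∈ B, b ≤ a} = B :=
  stmt19_general B t hmod hex
end
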